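/- Let φ_μ, φ_ν, φ_ω be vectors in ℂ² that are pairwise linearly independent, and let ψ_μ, ψ_ν, ψ_ω be vectors in ℂ² that are pairwise linearly independent. Then there do not exist complex numbers c₁, c₂ with φ_ω ⊗ ψ_ω = c₁·(φ_μ ⊗ ψ_μ) + c₂·(φ_ν ⊗ ψ_ν). Consequently, for a strict one-qubit fingerprinting scheme with at least three distinct inputs, the accept space spanned by the matching states φ_σ ⊗ ψ_σ has dimension at least 3. -/

import Mathlib

open scoped InnerProductSpace

/-- A concrete model of the tensor product `ℂ² ⊗ ℂ²`, realized as
`EuclideanSpace ℂ (Fin 2 × Fin 2)`; it satisfies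
`⟪tens a b, tens c d⟫ = ⟪a, c⟫ * ⟪b, d⟫`. -/
noncomputable def tens (f g : EuclideanSpace ℂ (Fin 2)) :
    EuclideanSpace ℂ (Fin 2 × Fin 2) :=
  (WithLp.equiv 2 (Fin 2 × Fin 2 → ℂ)).symm (fun ij => f ij.1 * g ij.2)

/- Write `φω = a • φμ + b • φν`, which is
possible since `φμ, φν` span `ℂ²`. A relation `φω ⊗ ψω = c₁ • φμ ⊗ ψμ + c₂ • φν ⊗ ψν` then becomes
`φμ ⊗ (a • ψω - c₁ • ψμ) + φν ⊗ (b • ψω - c₂ • ψν) = 0`, and independence of `φμ, φν` forces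
`a • ψω = c₁ • ψμ`. Since `φω` is not parallel to `φν`, `a ≠ 0`, so `ψω` is parallel to `ψμ`, a
contradiction. The bound on the dimension follows because `φμ ⊗ ψμ, φν ⊗ ψν` are independent
and `φω ⊗ ψω` lies outside their span. -/

open Submodule

lemma tens_apply (f g : EuclideanSpace ℂ (Fin 2)) (ij : Fin 2 × Fin 2) :
    tens f g ij = f ij.1 * g ij.2 := rfl

section Bilinear

variable (f g h : EuclideanSpace ℂ (Fin 2)) (c : ℂ)

lemma tens_add_left : tens (f + g) h = tens f h + tens g h := by
  ext ij; simp only [tens_apply, PiLp.add_apply]; ring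

lemma tens_smul_left : tens (c • f) g = c • tens f g := by
  ext ij; simp only [tens_apply, PiLp.smul_apply, smul_eq_mul]; ring

lemma tens_sub_right : tens f (g - h) = tens f g - tens f h := by
  ext ij; simp only [tens_apply, PiLp.sub_apply]; ring

lemma tens_smul_right : tens f (c • g) = c • tens f g := by
  ext ij; simp only [tens_apply, PiLp.smul_apply, smul_eq_mul]; ring

end Bilinear

variable {a b u v : EuclideanSpace ℂ (Fin 2)}

lemma LinearIndependent.eq_zero_of_tens_add_tens_eq_zero (hab : LinearIndependent ℂ ![a, b])
    (h : tens a u + tens b v = 0) : u = 0 ∧ v = 0 := by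
  have hcoord : ∀ j, u j = 0 ∧ v j = 0 := fun j => by
    refine LinearIndependent.pair_iff.mp hab (u j) (v j) ?_
    ext i
    have hij := congrArg (· (i, j)) h
    simp only [PiLp.add_apply, PiLp.smul_apply, smul_eq_mul, PiLp.zero_apply, tens_apply] at hij ⊢
    linear_combination hij
  exact ⟨by ext j; exact (hcoord j).1, by ext j; exact (hcoord j).2⟩

lemma LinearIndependent.exists_smul_add_smul_eq (hab : LinearIndependent ℂ ![a, b])
    (x : EuclideanSpace ℂ (Fin 2)) : ∃ s t : ℂ, s • a + t • b = x := by
  have hspan : span ℂ (Set.range ![a, b]) = ⊤ :=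
    hab.span_eq_top_of_card_eq_finrank (by simp [finrank_euclideanSpace])
  rw [Matrix.range_cons_cons_empty] at hspan
  exact mem_span_pair.mp (hspan ▸ mem_top)

theorem tens_notMem_span_pair {φμ φν φω ψμ ψν ψω : EuclideanSpace ℂ (Fin 2)}
    (hφ : LinearIndependent ℂ ![φμ, φν])
    (hφνω : LinearIndependent ℂ ![φν, φω]) (hψμω : LinearIndependent ℂ ![ψμ, ψω]) :
    tens φω ψω ∉ span ℂ {tens φμ ψμ, tens φν ψν} := by
  intro hmem
  obtain ⟨c₁, c₂, hc⟩ := mem_span_pair.mp hmem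
  obtain ⟨a, b, rfl⟩ := hφ.exists_smul_add_smul_eq φω
  have hrel : tens φμ (a • ψω - c₁ • ψμ) + tens φν (b • ψω - c₂ • ψν) = 0 := by
    simp only [tens_add_left, tens_smul_left, tens_sub_right, tens_smul_right] at hc ⊢
    linear_combination (norm := module) -hc
  have hψ : a • ψω - c₁ • ψμ = 0 := (hφ.eq_zero_of_tens_add_tens_eq_zero hrel).1
  have ha : a ≠ 0 := by
    rintro rfl
    have hdep : b • φν + (-1 : ℂ) • ((0 : ℂ) • φμ + b • φν) = 0 := by module
    simpa using (LinearIndependent.pair_iff.mp hφνω _ _ hdep).2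
  have hdep : c₁ • ψμ + (-a) • ψω = 0 := by linear_combination (norm := module) -hψ
  exact ha (neg_eq_zero.mp (LinearIndependent.pair_iff.mp hψμω _ _ hdep).2)

lemma linearIndependent_tens_pair (hab : LinearIndependent ℂ ![a, b]) (hu : u ≠ 0) (hv : v ≠ 0) :
    LinearIndependent ℂ ![tens a u, tens b v] := by
  refine LinearIndependent.pair_iff.mpr fun s t h => ?_
  rw [← tens_smul_right, ← tens_smul_right] at h
  obtain ⟨hs, ht⟩ := hab.eq_zero_of_tens_add_tens_eq_zero h
  exact ⟨(smul_eq_zero.mp hs).resolve_right hu, (smul_eq_zero.mp ht).resolve_right hv⟩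

theorem matching_states_dim_ge_three_general
    (φμ φν φω ψμ ψν ψω : EuclideanSpace ℂ (Fin 2))
    (hφ1 : LinearIndependent ℂ ![φμ, φν])
    (hφ3 : LinearIndependent ℂ ![φν, φω])
    (hψ1 : LinearIndependent ℂ ![ψμ, ψν])
    (hψ2 : LinearIndependent ℂ ![ψμ, ψω]) :
    (¬ ∃ c₁ c₂ : ℂ, tens φω ψω = c₁ • tens φμ ψμ + c₂ • tens φν ψν) ∧
    3 ≤ Module.finrank ℂ
        (Submodule.span ℂ ({tens φμ ψμ, tens φν ψν, tens φω ψω} :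
          Set (EuclideanSpace ℂ (Fin 2 × Fin 2)))) := by
  have hω : tens φω ψω ∉ span ℂ {tens φμ ψμ, tens φν ψν} := tens_notMem_span_pair hφ1 hφ3 hψ2
  have hind : LinearIndependent ℂ ![tens φω ψω, tens φμ ψμ, tens φν ψν] :=
    (linearIndependent_tens_pair hφ1 (hψ1.ne_zero 0) (hψ1.ne_zero 1)).finCons
      (by rwa [Matrix.range_cons_cons_empty])
  refine ⟨fun ⟨c₁, c₂, h⟩ => hω (mem_span_pair.mpr ⟨c₁, c₂, h.symm⟩), ?_⟩
  rw [Set.pair_comm, Set.insert_comm, ← Matrix.range_cons_cons_empty _ _ ![], ← Set.singleton_union,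
    ← Matrix.range_cons, finrank_span_eq_card hind, Fintype.card_fin]

/-- If `φ_μ, φ_ν, φ_ω` are pairwise linearly independent in `ℂ²`
and likewise `ψ_μ, ψ_ν, ψ_ω`, then `φ_ω ⊗ ψ_ω` is not a linear combination of
`φ_μ ⊗ ψ_μ` and `φ_ν ⊗ ψ_ν`; consequently the span of the three matching states has
dimension at least `3`. -/
theorem matching_states_dim_ge_three
    (φμ φν φω ψμ ψν ψω : EuclideanSpace ℂ (Fin 2))
    (hφ1 : LinearIndependent ℂ ![φμ, φν])
    (hφ2 : LinearIndependent ℂ ![φμ, φω])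
    (hφ3 : LinearIndependent ℂ ![φν, φω])
    (hψ1 : LinearIndependent ℂ ![ψμ, ψν])
    (hψ2 : LinearIndependent ℂ ![ψμ, ψω])
    (hψ3 : LinearIndependent ℂ ![ψν, ψω]) :
    (¬ ∃ c₁ c₂ : ℂ, tens φω ψω = c₁ • tens φμ ψμ + c₂ • tens φν ψν) ∧
    3 ≤ Module.finrank ℂ
        (Submodule.span ℂ ({tens φμ ψμ, tens φν ψν, tens φω ψω} :
          Set (EuclideanSpace ℂ (Fin 2 × Fin 2)))) :=
  matching_states_dim_ge_three_general φμ φν φω ψμ ψν ψω hφ1 hφ3 hψ1 hψ2
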